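/- Let f : Finset α → ℝ, let D be a finite subset of α, and let a, b be two distinct elements not in D. Suppose f(H ∪ {a, b}) = f(H) for every H ⊆ D. Then C_f(D ∪ {a}) + C_f(D ∪ {b}) + C_f(D ∪ {a, b}) = 0, where C_f(S) = Σ_{H ⊆ S} (−1)^{|S| − |H|} f(H). -/

import Mathlib

/-!
Removing an element `a ∉ S` from the set turns the alternating sum into that of the discrete
derivative `H ↦ f (insert a H) - f H`. Doing this for `a`, for `b`, and for both, the three terms
become alternating sums over the subsets of `D`, whose summands add up to
`f (insert a (insert b H)) - f H = 0`.
-/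

/-- The alternating-sum transform `C_f(S) = Σ_{H ⊆ S} (−1)^(|S| − |H|) f(H)`. -/
noncomputable def Cf {α : Type*} (f : Finset α → ℝ) (S : Finset α) : ℝ :=
  ∑ H ∈ S.powerset, (-1 : ℝ) ^ (S.card - H.card) * f H

open Finset

theorem Cf_add {α : Type*} (f g : Finset α → ℝ) (S : Finset α) :
    Cf f S + Cf g S = Cf (f + g) S := by
  simp only [Cf, ← sum_add_distrib, Pi.add_apply, mul_add]

theorem Cf_eq_zero {α : Type*} {f : Finset α → ℝ} {S : Finset α} (hf : ∀ H ⊆ S, f H = 0) :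
    Cf f S = 0 :=
  sum_eq_zero fun H hH => by rw [hf H (mem_powerset.mp hH), mul_zero]

theorem Cf_insert {α : Type*} [DecidableEq α] (f : Finset α → ℝ) {a : α} {S : Finset α}
    (ha : a ∉ S) : Cf f (insert a S) = Cf (fun H => f (insert a H) - f H) S := by
  rw [Cf, sum_powerset_insert ha, Cf, ← sum_add_distrib]
  refine sum_congr rfl fun H hH => ?_
  have hHS : H ⊆ S := mem_powerset.mp hH
  have haH : a ∉ H := fun h => ha (hHS h)
  rw [card_insert_of_notMem ha, card_insert_of_notMem haH, Nat.succ_sub_succ,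
    Nat.succ_sub (card_le_card hHS), pow_succ]
  ring

/-- Cancelling pair relation: if adding both `a` and `b` never changes the
value of `f` on subsets of `D`, then
`C_f(D ∪ {a}) + C_f(D ∪ {b}) + C_f(D ∪ {a, b}) = 0`. -/
theorem Cf_pair_relation {α : Type*} [DecidableEq α] (f : Finset α → ℝ)
    (D : Finset α) (a b : α) (hab : a ≠ b) (ha : a ∉ D) (hb : b ∉ D)
    (hf : ∀ H ⊆ D, f (insert a (insert b H)) = f H) :
    Cf f (insert a D) + Cf f (insert b D) + Cf f (insert a (insert b D)) = 0 := by
  have haD : a ∉ insert b D := by simp [hab, ha]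
  rw [Cf_insert f ha, Cf_insert f hb, Cf_insert f haD, Cf_insert _ hb, Cf_add, Cf_add]
  refine Cf_eq_zero fun H hH => ?_
  simp only [Pi.add_apply, hf H hH]
  ring
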